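/- arXiv:1902.02258 — 6 statements merged into one kernel-verified Lean document; each statement's English description precedes it below -/
import Mathlib

section
/- Let A and B be N×N matrices over a commutative ring. Then per(A+B) = Σ_{n=0}^{N} Σ_{K,J} per(A(K|J))·per(B(K^c|J^c)), where the inner sum runs over all pairs of subsets K, J of {1,…,N} with |K| = |J| = n, A(K|J) denotes the submatrix of A with rows K and columns J, K^c and J^c are the complements of K and J in {1,…,N}, and the permanent of the empty (0×0) matrix is 1. -/
/-!
Expanding `∏ i, (A i (σ i) + B i (σ i))` over the set `K` of rows in which the `A`-entry is
chosen, and splitting each permutation `σ` with `σ(K) = J` into a bijection `K ≃ J` and a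
bijection `Kᶜ ≃ Jᶜ`, gives `per (A + B) = ∑ K, ∑ J, per A(K|J) * per B(Kᶜ|Jᶜ)`. Terms with
`|K| ≠ |J|` vanish because there is no bijection `K ≃ J`.
-/

open Finset

/-- Permanent of the submatrix of `A` on the row set `K` and the column set `J`:
the sum over all bijections `e : K ≃ J` of `∏_{i ∈ K} A i (e i)`.
When `K.card = J.card = n` this is exactly the permanent of the `n × n` submatrix
`A(K|J)` (the permanent does not depend on the orderings of rows and columns);
for `K = J = ∅` it equals `1` (the permanent of the empty matrix). -/
def permOn {α β R : Type*} [DecidableEq α] [DecidableEq β] [CommRing R]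
    (A : α → β → R) (K : Finset α) (J : Finset β) : R :=
  ∑ e : {x // x ∈ K} ≃ {y // y ∈ J}, ∏ i : {x // x ∈ K}, A i (e i)

namespace Equiv

variable {α : Type*} {p q : α → Prop} [DecidablePred p] [DecidablePred q]

theorem subtypeCongr_apply_of_pos (e : {x // p x} ≃ {x // q x}) (f : {x // ¬p x} ≃ {x // ¬q x})
    {a : α} (h : p a) : e.subtypeCongr f a = e ⟨a, h⟩ := by
  simp [subtypeCongr, h]

theorem subtypeCongr_apply_of_neg (e : {x // p x} ≃ {x // q x}) (f : {x // ¬p x} ≃ {x // ¬q x})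
    {a : α} (h : ¬p a) : e.subtypeCongr f a = f ⟨a, h⟩ := by
  simp [subtypeCongr, h]

end Equiv

namespace Equiv.Perm

variable {α : Type*}

theorem map_toEmbedding_eq_iff {σ : Perm α} {K J : Finset α} :
    K.map σ.toEmbedding = J ↔ ∀ a, a ∈ K ↔ σ a ∈ J := by
  constructor
  · rintro rfl a
    simp
  · intro h
    ext b
    rw [mem_map_equiv, h, apply_symm_apply]

variable [DecidableEq α] [Fintype α]

def mapEqEquivProd (K J : Finset α) :
    {σ : Perm α // K.map σ.toEmbedding = J} ≃ (K ≃ J) × (↑Kᶜ ≃ ↑Jᶜ) where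
  toFun σ := (σ.1.subtypeEquiv (map_toEmbedding_eq_iff.1 σ.2),
    σ.1.subtypeEquiv fun a => by simp [map_toEmbedding_eq_iff.1 σ.2 a])
  invFun fg := ⟨Equiv.subtypeCongr fg.1
    ((subtypeEquivRight fun _ => mem_compl.symm).trans
      (fg.2.trans (subtypeEquivRight fun _ => mem_compl))), by
    refine map_toEmbedding_eq_iff.2 fun a => ?_
    by_cases ha : a ∈ K
    · simp [subtypeCongr_apply_of_pos _ _ ha, ha]
    · simp only [subtypeCongr_apply_of_neg _ _ ha, trans_apply, subtypeEquivRight_apply, ha,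
        false_iff]
      exact mem_compl.1 (fg.2 _).2⟩
  left_inv σ := by
    ext a
    by_cases ha : a ∈ K
    · simp [subtypeCongr_apply_of_pos _ _ ha]
    · simp [subtypeCongr_apply_of_neg _ _ ha]
  right_inv fg := by
    ext a
    · simp [subtypeCongr_apply_of_pos _ _ a.2]
    · simp [subtypeCongr_apply_of_neg _ _ (mem_compl.1 a.2), subtypeEquivRight_apply]

end Equiv.Perm

section

variable {α β R : Type*} [DecidableEq α] [DecidableEq β] [CommRing R]

theorem permOn_eq_zero_of_card_ne (A : α → β → R) {K : Finset α} {J : Finset β}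
    (h : #K ≠ #J) : permOn A K J = 0 := by
  have : IsEmpty (K ≃ J) := ⟨fun e => h (by simpa using Fintype.card_congr e)⟩
  rw [permOn, univ_eq_empty, sum_empty]

end

section

variable {α R : Type*} [DecidableEq α] [Fintype α] [CommRing R]

theorem permOn_univ_univ (A : α → α → R) :
    permOn A univ univ = ∑ σ : Equiv.Perm α, ∏ i, A i (σ i) := by
  let e : (univ : Finset α) ≃ α := Equiv.subtypeUnivEquiv mem_univ
  refine Fintype.sum_equiv (e.equivCongr e) _ _ fun σ => ?_
  exact Fintype.prod_equiv e _ _ fun i => rfl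

theorem sum_perm_prod_mul_prod_compl (A B : α → α → R) (K : Finset α) :
    ∑ σ : Equiv.Perm α, (∏ i ∈ K, A i (σ i)) * ∏ i ∈ Kᶜ, B i (σ i) =
      ∑ J, permOn A K J * permOn B Kᶜ Jᶜ := by
  rw [← sum_fiberwise univ fun σ : Equiv.Perm α => K.map σ.toEmbedding]
  refine sum_congr rfl fun J _ => ?_
  rw [permOn, permOn, sum_mul_sum, ← Fintype.sum_prod_type', 
    sum_subtype _ (p := fun σ => K.map σ.toEmbedding = J) fun σ => by simp]
  refine Fintype.sum_equiv (Equiv.Perm.mapEqEquivProd K J) _ _ fun σ => ?_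
  rw [← prod_coe_sort K, ← prod_coe_sort Kᶜ]
  rfl

theorem permOn_add_univ (A B : α → α → R) :
    permOn (fun i j => A i j + B i j) univ univ = ∑ K, ∑ J, permOn A K J * permOn B Kᶜ Jᶜ := by
  calc permOn (fun i j => A i j + B i j) univ univ
      = ∑ σ : Equiv.Perm α, ∑ K, (∏ i ∈ K, A i (σ i)) * ∏ i ∈ Kᶜ, B i (σ i) := by
        simp only [permOn_univ_univ, Fintype.prod_add]
    _ = ∑ K, ∑ σ : Equiv.Perm α, (∏ i ∈ K, A i (σ i)) * ∏ i ∈ Kᶜ, B i (σ i) := sum_comm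
    _ = _ := sum_congr rfl fun K _ => sum_perm_prod_mul_prod_compl A B K

end

/-- **Permanent expansion for a sum of two matrices.**
For `N × N` matrices `A`, `B` over a commutative ring,
`per (A + B) = Σ_{n=0}^{N} Σ_{K,J : |K|=|J|=n} per(A(K|J)) · per(B(Kᶜ|Jᶜ))`. -/
theorem permanent_add_expansion {R : Type*} [CommRing R] (N : ℕ)
    (A B : Matrix (Fin N) (Fin N) R) :
    permOn (fun i j => (A + B) i j) Finset.univ Finset.univ =
      ∑ n ∈ Finset.range (N + 1),
        ∑ K ∈ Finset.powersetCard n (Finset.univ : Finset (Fin N)),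
          ∑ J ∈ Finset.powersetCard n (Finset.univ : Finset (Fin N)),
            permOn (fun i j => A i j) K J * permOn (fun i j => B i j) Kᶜ Jᶜ := by
  have sum_powersetCard_eq_sum (n : ℕ) (K : Finset (Fin N)) (hK : #K = n) :
      ∑ J ∈ powersetCard n univ, permOn A K J * permOn B Kᶜ Jᶜ =
        ∑ J, permOn A K J * permOn B Kᶜ Jᶜ := by
    refine sum_subset (subset_univ _) fun J _ hJ => ?_
    rw [permOn_eq_zero_of_card_ne A fun h => hJ (mem_powersetCard_univ.2 (hK ▸ h).symm),
      zero_mul]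
  calc permOn (fun i j => (A + B) i j) univ univ
      = ∑ K, ∑ J, permOn A K J * permOn B Kᶜ Jᶜ := permOn_add_univ A B
    _ = ∑ n ∈ range (N + 1), ∑ K ∈ powersetCard n univ,
          ∑ J, permOn A K J * permOn B Kᶜ Jᶜ := by
        rw [← powerset_univ, sum_powerset, card_univ, Fintype.card_fin]
    _ = _ := sum_congr rfl fun n _ => sum_congr rfl fun K hK =>
        (sum_powersetCard_eq_sum n K (mem_powersetCard_univ.1 hK)).symm
end

section
/- Let (G_{kl})_{1≤k,l≤M} be mutually independent complex-valued square-integrable random variables with E[G_{kl}] = 0 and E[|G_{kl}|²] = 1/M. Let l_1,…,l_N be distinct elements of {1,…,M} with N ≤ M, and let J : S_N → ℂ be any function on the symmetric group S_N. Then E[ Σ_{σ_1,σ_2 ∈ S_N} J(σ_1 σ_2^{-1}) ∏_{k=1}^{N} conj(G_{σ_1(k), l_k}) · G_{σ_2(k), l_k} ] = (N!/M^N) · J(id), where id is the identity permutation. -/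
/-!
Each term of the double sum is the expectation of a product of `conj G` over the cells
`(σ₁ k, l k)` and of `G` over the cells `(σ₂ k, l k)`. By independence it factors over the cells:
a cell used by both permutations contributes `E|G|² = 1/M`, a cell used by only one contributes
`E G = 0` or its conjugate. As the `l k` are distinct columns, the set of cells determines the
permutation, so only the `N!` diagonal terms `σ₁ = σ₂` survive, each equal to `J 1 / M ^ N`.
-/

open Finset MeasureTheory ProbabilityTheory ComplexConjugate

lemma prod_conj_mul_prod_eq_prod_ite {ι : Type*} [Fintype ι] [DecidableEq ι] (s t : Finset ι)
    (x : ι → ℂ) :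
    (∏ i ∈ s, conj (x i)) * ∏ i ∈ t, x i =
      ∏ i, (if i ∈ s then conj (x i) else 1) * (if i ∈ t then x i else 1) := by
  rw [prod_mul_distrib, Fintype.prod_ite_mem, Fintype.prod_ite_mem]

namespace ProbabilityTheory

variable {Ω ι : Type*} [MeasurableSpace Ω] {μ : Measure Ω}

lemma iIndepFun.integrable_fun_prod [Fintype ι] {𝕜 : Type*} [RCLike 𝕜] {Y : ι → Ω → 𝕜}
    (hY : iIndepFun Y μ) (hint : ∀ i, Integrable (Y i) μ) :
    Integrable (fun ω ↦ ∏ i, Y i ω) μ := by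
  have := hY.isProbabilityMeasure
  have mY : ∀ i, AEMeasurable (Y i) μ := fun i ↦ (hint i).aemeasurable
  have h : Integrable (fun y : ι → 𝕜 ↦ ∏ i, y i) (μ.map fun ω i ↦ Y i ω) := by
    rw [hY.map_fun_eq_pi_map mY]
    exact .fintype_prod fun i ↦ (integrable_map_measure aestronglyMeasurable_id (mY i)).2 (hint i)
  exact h.comp_aemeasurable (aemeasurable_pi_lambda _ mY)

lemma integrable_ite_conj_mul_ite [IsFiniteMeasure μ] {Z : Ω → ℂ} (hZ : MemLp Z 2 μ)
    (a b : Prop) [Decidable a] [Decidable b] :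
    Integrable (fun ω ↦ (if a then conj (Z ω) else 1) * (if b then Z ω else 1)) μ := by
  have hconj : MemLp (fun ω ↦ if a then conj (Z ω) else 1) 2 μ := by
    split_ifs
    · exact hZ.star
    · exact memLp_const 1
  have hZ' : MemLp (fun ω ↦ if b then Z ω else 1) 2 μ := by
    split_ifs
    · exact hZ
    · exact memLp_const 1
  exact hconj.integrable_mul hZ'

variable [DecidableEq ι] {X : ι → Ω → ℂ}

lemma iIndepFun.ite_conj_mul_ite (hX : iIndepFun X μ) (s t : Finset ι) :
    iIndepFun (fun i ω ↦ (if i ∈ s then conj (X i ω) else 1) * (if i ∈ t then X i ω else 1)) μ :=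
  hX.comp (fun i z ↦ (if i ∈ s then conj z else 1) * (if i ∈ t then z else 1))
    fun i ↦ by split_ifs <;> fun_prop

variable [Fintype ι]

lemma iIndepFun.integrable_prod_conj_mul_prod (hX : iIndepFun X μ) (hX2 : ∀ i, MemLp (X i) 2 μ)
    (s t : Finset ι) :
    Integrable (fun ω ↦ (∏ i ∈ s, conj (X i ω)) * ∏ i ∈ t, X i ω) μ := by
  have := hX.isProbabilityMeasure
  simp_rw [prod_conj_mul_prod_eq_prod_ite]
  exact (hX.ite_conj_mul_ite s t).integrable_fun_prod
    fun i ↦ integrable_ite_conj_mul_ite (hX2 i) _ _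

lemma iIndepFun.integral_prod_conj_mul_prod (hX : iIndepFun X μ) (hX2 : ∀ i, MemLp (X i) 2 μ)
    (hmean : ∀ i, ∫ ω, X i ω ∂μ = 0) (s t : Finset ι) :
    ∫ ω, (∏ i ∈ s, conj (X i ω)) * ∏ i ∈ t, X i ω ∂μ =
      if s = t then ∏ i ∈ s, ((∫ ω, ‖X i ω‖ ^ 2 ∂μ : ℝ) : ℂ) else 0 := by
  have := hX.isProbabilityMeasure
  simp_rw [prod_conj_mul_prod_eq_prod_ite]
  rw [(hX.ite_conj_mul_ite s t).integral_fun_prod_eq_prod_integral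
    fun i ↦ (integrable_ite_conj_mul_ite (hX2 i) _ _).aestronglyMeasurable]
  split_ifs with hst
  · subst hst
    rw [← Fintype.prod_ite_mem s]
    refine prod_congr rfl fun i _ ↦ ?_
    split_ifs
    · simp_rw [Complex.conj_mul', ← Complex.ofReal_pow]
      exact integral_ofReal
    · simp
  · obtain ⟨i, hi⟩ : ∃ i, (i ∈ s ∧ i ∉ t) ∨ (i ∈ t ∧ i ∉ s) := by
      by_contra! h
      exact hst (Finset.ext fun i ↦ ⟨(h i).1, (h i).2⟩)
    refine prod_eq_zero (mem_univ i) ?_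
    rcases hi with ⟨hs, ht⟩ | ⟨ht, hs⟩ <;> simp [hs, ht, integral_conj, hmean]

end ProbabilityTheory

section PermCells

variable {α β γ : Type*} [Fintype α] [DecidableEq β] [DecidableEq γ]

def permCells (r : α → β) (c : α → γ) (σ : Equiv.Perm α) : Finset (β × γ) :=
  univ.image fun k ↦ (r (σ k), c k)

lemma prod_permCells {R : Type*} [CommMonoid R] {r : α → β} {c : α → γ} (hc : c.Injective)
    (σ : Equiv.Perm α) (f : β × γ → R) :
    ∏ p ∈ permCells r c σ, f p = ∏ k, f (r (σ k), c k) :=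
  prod_image fun _ _ _ _ h ↦ hc (congrArg Prod.snd h)

lemma permCells_injective {r : α → β} {c : α → γ} (hr : r.Injective) (hc : c.Injective) :
    (permCells r c).Injective := by
  intro σ τ h
  ext k
  have hk : (r (σ k), c k) ∈ permCells r c τ := h ▸ mem_image_of_mem _ (mem_univ k)
  obtain ⟨k', -, hk'⟩ := mem_image.1 hk
  obtain rfl : k' = k := hc (congrArg Prod.snd hk')
  exact hr (congrArg Prod.fst hk').symm

end PermCells

theorem average_probability_partial_distinguishability_general
    {Ω : Type*} [MeasurableSpace Ω] (μ : Measure Ω)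
    (M N : ℕ) (hNM : N ≤ M) (G : Fin M → Fin M → Ω → ℂ)
    (hindep : iIndepFun
      (fun p : Fin M × Fin M => G p.1 p.2) μ)
    (hL2 : ∀ k l, MemLp (G k l) 2 μ)
    (hmean : ∀ k l, ∫ ω, G k l ω ∂μ = 0)
    (hvar : ∀ k l, ∫ ω, ‖G k l ω‖ ^ 2 ∂μ = 1 / (M : ℝ))
    (l : Fin N → Fin M) (hl : Function.Injective l)
    (J : Equiv.Perm (Fin N) → ℂ) :
    ∫ ω, ∑ σ₁ : Equiv.Perm (Fin N), ∑ σ₂ : Equiv.Perm (Fin N),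
        J (σ₁ * σ₂⁻¹) * ∏ k : Fin N,
          (starRingEnd ℂ) (G (Fin.castLE hNM (σ₁ k)) (l k) ω) *
            G (Fin.castLE hNM (σ₂ k)) (l k) ω ∂μ =
      ((N.factorial : ℂ) / (M : ℂ) ^ N) * J 1 := by
  classical
  set cells := permCells (Fin.castLE hNM) l
  have hterm : ∀ σ₁ σ₂ ω, ∏ k, conj (G (Fin.castLE hNM (σ₁ k)) (l k) ω) *
      G (Fin.castLE hNM (σ₂ k)) (l k) ω =
        (∏ p ∈ cells σ₁, conj (G p.1 p.2 ω)) * ∏ p ∈ cells σ₂, G p.1 p.2 ω := fun σ₁ σ₂ ω ↦ by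
    rw [prod_permCells hl, prod_permCells hl, prod_mul_distrib]
  have hcells : ∀ σ, ∏ p ∈ cells σ, ((∫ ω, ‖G p.1 p.2 ω‖ ^ 2 ∂μ : ℝ) : ℂ) = 1 / (M : ℂ) ^ N := by
    intro σ
    simp [cells, prod_permCells hl, hvar]
  have hcells_inj : cells.Injective := permCells_injective (Fin.castLE_injective hNM) hl
  have hint := hindep.integrable_prod_conj_mul_prod fun p ↦ hL2 p.1 p.2
  simp_rw [hterm]
  rw [integral_finsetSum _ fun σ₁ _ ↦ integrable_finsetSum _ fun σ₂ _ ↦ (hint _ _).const_mul _,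
    sum_congr rfl fun σ₁ _ ↦ integral_finsetSum _ fun σ₂ _ ↦
      (hint (cells σ₁) (cells σ₂)).const_mul _]
  simp_rw [integral_const_mul,
    hindep.integral_prod_conj_mul_prod (fun p ↦ hL2 p.1 p.2) (fun p ↦ hmean p.1 p.2),
    hcells_inj.eq_iff, hcells]
  simp [Fintype.card_perm]
  ring

/-- **Average output probability with an arbitrary distinguishability function.**
Let `(G k l)` be mutually independent square-integrable complex random variables with
`E[G k l] = 0` and `E[|G k l|²] = 1/M`, let `l₁,…,l_N` be distinct elements of
`{1,…,M}` with `N ≤ M`, and let `J : S_N → ℂ` be any function.  Then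
`E[Σ_{σ₁,σ₂ ∈ S_N} J(σ₁σ₂⁻¹) ∏_k conj(G_{σ₁(k),l_k}) G_{σ₂(k),l_k}] = (N!/M^N)·J(id)`. -/
theorem average_probability_partial_distinguishability
    {Ω : Type*} [MeasurableSpace Ω] (μ : Measure Ω) [IsProbabilityMeasure μ]
    (M N : ℕ) (hNM : N ≤ M) (G : Fin M → Fin M → Ω → ℂ)
    (hindep : iIndepFun
      (fun p : Fin M × Fin M => G p.1 p.2) μ)
    (hL2 : ∀ k l, MemLp (G k l) 2 μ)
    (hmean : ∀ k l, ∫ ω, G k l ω ∂μ = 0)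
    (hvar : ∀ k l, ∫ ω, ‖G k l ω‖ ^ 2 ∂μ = 1 / (M : ℝ))
    (l : Fin N → Fin M) (hl : Function.Injective l)
    (J : Equiv.Perm (Fin N) → ℂ) :
    ∫ ω, ∑ σ₁ : Equiv.Perm (Fin N), ∑ σ₂ : Equiv.Perm (Fin N),
        J (σ₁ * σ₂⁻¹) * ∏ k : Fin N,
          (starRingEnd ℂ) (G (Fin.castLE hNM (σ₁ k)) (l k) ω) *
            G (Fin.castLE hNM (σ₂ k)) (l k) ω ∂μ =
      ((N.factorial : ℂ) / (M : ℂ) ^ N) * J 1 :=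
  average_probability_partial_distinguishability_general μ M N hNM G hindep hL2 hmean hvar l hl J
end

section
/- Let U be an M×M unitary complex matrix and let k_1,…,k_N be distinct elements of {1,…,M}. Then the sum over all N-tuples (l_1,…,l_N) ∈ {1,…,M}^N of |per U(k_1…k_N | l_1…l_N)|² equals N!. -/
/-! Expand `|per A_l|² = per A_l · conj (per A_l)` as a double sum over pairs of permutations
`(σ, τ)` and sum over the column tuples `l` first: that sum factors into a product over positions
of inner products of rows of `U`. The chosen rows are orthonormal, so the pair `(σ, τ)`
contributes `1` if `σ = τ` and `0` otherwise, leaving `N!` diagonal terms. -/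

open Finset

/-- The permanent of an `N × N` matrix: `per A = Σ_{σ ∈ S_N} ∏_i A i (σ i)`. -/
noncomputable def perm {N : ℕ} (A : Matrix (Fin N) (Fin N) ℂ) : ℂ :=
  ∑ σ : Equiv.Perm (Fin N), ∏ i : Fin N, A i (σ i)

open ComplexConjugate Equiv
open scoped Matrix

section OrthonormalRows

variable {ι m : Type*}

lemma sum_mul_conj_eq_ite_of_mul_conjTranspose_eq_one [DecidableEq ι] [Fintype m]
    {V : Matrix ι m ℂ} (hV : V * Vᴴ = 1) (a b : ι) :
    ∑ x, V a x * conj (V b x) = if a = b then 1 else 0 := by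
  simpa [Matrix.mul_apply, Matrix.one_apply] using congrFun (congrFun hV a) b

lemma prod_comp_perm_mul_conj_prod_comp_perm [Fintype ι] (V : Matrix ι m ℂ) (l : ι → m)
    (σ τ : Perm ι) :
    (∏ i, V i (l (σ i))) * conj (∏ i, V i (l (τ i))) =
      ∏ j, V (σ⁻¹ j) (l j) * conj (V (τ⁻¹ j) (l j)) := by
  rw [map_prod, prod_mul_distrib, ← Equiv.prod_comp σ fun j => V (σ⁻¹ j) (l j),
    ← Equiv.prod_comp τ fun j => conj (V (τ⁻¹ j) (l j))]
  simp

lemma sum_prod_comp_perm_mul_conj_of_mul_conjTranspose_eq_one [Fintype ι] [DecidableEq ι]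
    [Fintype m] {V : Matrix ι m ℂ} (hV : V * Vᴴ = 1) (σ τ : Perm ι) :
    ∑ l : ι → m, (∏ i, V i (l (σ i))) * conj (∏ i, V i (l (τ i))) =
      if σ = τ then 1 else 0 := by
  simp_rw [prod_comp_perm_mul_conj_prod_comp_perm]
  rw [← Fintype.prod_sum fun j x => V (σ⁻¹ j) x * conj (V (τ⁻¹ j) x)]
  simp_rw [sum_mul_conj_eq_ite_of_mul_conjTranspose_eq_one hV, Fintype.prod_boole,
    ← Equiv.ext_iff, inv_inj]

end OrthonormalRows

section Permanent

variable {m : Type*} [Fintype m] {N : ℕ} {V : Matrix (Fin N) m ℂ}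

lemma sum_perm_mul_conj_of_mul_conjTranspose_eq_one (hV : V * Vᴴ = 1) :
    ∑ l : Fin N → m, perm (fun i j => V i (l j)) * conj (perm fun i j => V i (l j)) =
      N.factorial := by
  simp_rw [perm, map_sum, sum_mul_sum]
  rw [sum_comm]
  have diagonal_only (σ : Perm (Fin N)) :
      ∑ l : Fin N → m, ∑ τ : Perm (Fin N),
        (∏ i, V i (l (σ i))) * conj (∏ i, V i (l (τ i))) = 1 := by
    rw [sum_comm]
    simp_rw [sum_prod_comp_perm_mul_conj_of_mul_conjTranspose_eq_one hV, sum_ite_eq, mem_univ,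
      if_true]
  simp only [diagonal_only, sum_const, card_univ, Fintype.card_perm, Fintype.card_fin,
    nsmul_eq_mul, mul_one]

lemma sum_norm_perm_sq_of_mul_conjTranspose_eq_one (hV : V * Vᴴ = 1) :
    ∑ l : Fin N → m, ‖perm fun i j => V i (l j)‖ ^ 2 = (N.factorial : ℝ) := by
  apply Complex.ofReal_injective
  push_cast
  simp_rw [← Complex.mul_conj']
  exact sum_perm_mul_conj_of_mul_conjTranspose_eq_one hV

end Permanent

/-- **Normalization of the Boson Sampling output distribution.**
For a unitary `M × M` matrix `U` and distinct input ports `k₁,…,k_N`, the sum over all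
`N`-tuples `(l₁,…,l_N) ∈ {1,…,M}^N` of `|per U(k₁…k_N|l₁…l_N)|²` equals `N!`. -/
theorem sum_abs_sq_permanent_unitary (M N : ℕ) (U : Matrix (Fin M) (Fin M) ℂ)
    (hU : U ∈ Matrix.unitaryGroup (Fin M) ℂ)
    (k : Fin N → Fin M) (hk : Function.Injective k) :
    ∑ l : Fin N → Fin M, ‖perm (fun i j => U (k i) (l j))‖ ^ 2 = (N.factorial : ℝ) := by
  have rows_orthonormal : U.submatrix k id * (U.submatrix k id)ᴴ = 1 := by
    rw [Matrix.conjTranspose_submatrix, ← Matrix.submatrix_mul _ _ _ _ _ Function.bijective_id,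
      ← Matrix.star_eq_conjTranspose, Matrix.mem_unitaryGroup_iff.mp hU,
      Matrix.submatrix_one _ hk]
  exact sum_norm_perm_sq_of_mul_conjTranspose_eq_one rows_orthonormal
end

section
/- For every natural number N and every real number x: Σ_{σ ∈ S_N} x^{N − fix(σ)} = Σ_{n=0}^{N} (N!/n!) · (1−x)^n · x^{N−n}. -/
open Finset

/-- The number of fixed points of a permutation. -/
def fixCount {N : ℕ} (σ : Equiv.Perm (Fin N)) : ℕ :=
  (Finset.univ.filter fun i => σ i = i).card

/-- The number of permutations of `Fin N` fixing a given finset pointwise is `(N - |s|)!`. -/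
lemma card_fixing (N : ℕ) (s : Finset (Fin N)) :
    (Finset.univ.filter fun σ : Equiv.Perm (Fin N) => ∀ i ∈ s, σ i = i).card
      = (N - s.card).factorial := by
  have e : Equiv.Perm {i : Fin N // i ∉ s} ≃ {σ : Equiv.Perm (Fin N) // ∀ i ∈ s, σ i = i} := by
    refine (Equiv.Perm.subtypeEquivSubtypePerm (fun i => i ∉ s)).trans
      (Equiv.subtypeEquiv (Equiv.refl _) ?_)
    intro σ
    simp [not_not]
  have h1 : Fintype.card {σ : Equiv.Perm (Fin N) // ∀ i ∈ s, σ i = i}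
      = (N - s.card).factorial := by
    rw [← Fintype.card_congr e, Fintype.card_perm, Fintype.card_subtype]
    congr 1
    rw [Finset.filter_not, Finset.card_sdiff_of_subset (by simp), Finset.card_univ, Fintype.card_fin]
    congr 1
    simp [Finset.filter_mem_eq_inter]
  rw [← h1, Fintype.card_subtype]

/-- Double counting pairs `(σ, s)` with `s` an `n`-subset of the fixed points of `σ`. -/
lemma count_sum (N n : ℕ) :
    ∑ σ : Equiv.Perm (Fin N), (fixCount σ).choose n
      = N.choose n * (N - n).factorial := by
  have key : ∀ σ : Equiv.Perm (Fin N), (fixCount σ).choose n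
      = ∑ s ∈ Finset.powersetCard n (Finset.univ : Finset (Fin N)),
          (if ∀ i ∈ s, σ i = i then 1 else 0) := by
    intro σ
    rw [Finset.sum_boole, Nat.cast_id]
    have : Finset.filter (fun s => ∀ i ∈ s, σ i = i)
        (Finset.powersetCard n (Finset.univ : Finset (Fin N)))
        = Finset.powersetCard n (Finset.univ.filter fun i => σ i = i) := by
      ext t
      simp only [Finset.mem_filter, Finset.mem_powersetCard, Finset.subset_iff,
        Finset.mem_univ, true_and, Finset.mem_filter]
      tauto
    rw [this, Finset.card_powersetCard, fixCount]
  simp_rw [key]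
  rw [Finset.sum_comm]
  have : ∀ s ∈ Finset.powersetCard n (Finset.univ : Finset (Fin N)),
      (∑ σ : Equiv.Perm (Fin N), if ∀ i ∈ s, σ i = i then 1 else 0)
        = (N - n).factorial := by
    intro s hs
    rw [Finset.sum_boole, Nat.cast_id, card_fixing]
    rw [(Finset.mem_powersetCard.mp hs).2]
  rw [Finset.sum_congr rfl this, Finset.sum_const, smul_eq_mul,
    Finset.card_powersetCard, Finset.card_univ, Fintype.card_fin]

/-- **Symmetric-subspace weight of the noise distinguishability function.**
For every `N` and every real `x`,
`Σ_{σ ∈ S_N} x^{N - fix(σ)} = Σ_{n=0}^{N} (N!/n!) (1-x)ⁿ x^{N-n}`. -/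
theorem sum_perm_pow_fixed_points (N : ℕ) (x : ℝ) :
    ∑ σ : Equiv.Perm (Fin N), x ^ (N - fixCount σ) =
      ∑ n ∈ Finset.range (N + 1),
        ((N.factorial : ℝ) / (n.factorial : ℝ)) * (1 - x) ^ n * x ^ (N - n) := by
  have hfix : ∀ σ : Equiv.Perm (Fin N), fixCount σ ≤ N := by
    intro σ
    exact (Finset.card_filter_le Finset.univ fun i => σ i = i).trans (by simp)
  have step1 : ∀ σ : Equiv.Perm (Fin N), x ^ (N - fixCount σ)
      = ∑ n ∈ Finset.range (N + 1),
          ((fixCount σ).choose n : ℝ) * (1 - x) ^ n * x ^ (N - n) := by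
    intro σ
    set f := fixCount σ with hf
    have hfN : f ≤ N := hfix σ
    have h1 : (1 : ℝ) = ((1 - x) + x) := by ring
    calc x ^ (N - f) = ((1 - x) + x) ^ f * x ^ (N - f) := by rw [← h1]; simp
      _ = (∑ n ∈ Finset.range (f + 1), (1 - x) ^ n * x ^ (f - n) * (f.choose n : ℝ))
          * x ^ (N - f) := by rw [add_pow]
      _ = ∑ n ∈ Finset.range (f + 1), (f.choose n : ℝ) * (1 - x) ^ n * x ^ (N - n) := by
          rw [Finset.sum_mul]
          refine Finset.sum_congr rfl fun n hn => ?_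
          have hnf : n ≤ f := Nat.lt_succ_iff.mp (Finset.mem_range.mp hn)
          have : x ^ (f - n) * x ^ (N - f) = x ^ (N - n) := by
            rw [← pow_add]
            congr 1
            omega
          rw [← this]; ring
      _ = ∑ n ∈ Finset.range (N + 1), (f.choose n : ℝ) * (1 - x) ^ n * x ^ (N - n) := by
          refine Finset.sum_subset ?_ ?_
          · exact Finset.range_subset_range.mpr (by omega)
          · intro n hn hn'
            have : f < n := by
              simp only [Finset.mem_range] at hn hn'
              omega
            rw [Nat.choose_eq_zero_of_lt this]
            simp
  simp_rw [step1]
  rw [Finset.sum_comm]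
  refine Finset.sum_congr rfl fun n hn => ?_
  have hnN : n ≤ N := Nat.lt_succ_iff.mp (Finset.mem_range.mp hn)
  rw [← Finset.sum_mul, ← Finset.sum_mul, ← Nat.cast_sum, count_sum]
  congr 2
  have h : N.choose n * (N - n).factorial * n.factorial = N.factorial := by
    rw [mul_right_comm]
    exact Nat.choose_mul_factorial_mul_factorial hnN
  rw [eq_div_iff (by positivity : (n.factorial : ℝ) ≠ 0)]
  exact_mod_cast h
end

section
/- Define χ(s) = Σ_{k=0}^{s} s!/k!. Let ε be a real number with 0 < ε < 1 and let R, N be natural numbers with R + 1 ≤ N. Then (1/N!) · Σ_{σ ∈ S_N, fix(σ) ≤ N−R−1} (1−ε)^{2(N − fix(σ))} · χ(fix(σ)) < (1 + e/(R+2)!) · (1−ε)^{2(R+1)} / (1 − (1−ε)²). -/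
/-!
There are `C(N, s) · D(N - s)` permutations with exactly `s` fixed points, `D` the derangement
numbers. As `D(m)/m!` is a partial sum of the alternating series for `e⁻¹`, we get
`D(m) ≤ m! (e⁻¹ + 1/(m+1)!)`, and `χ(s) ≤ e · s!`; hence every fixed-point count
`s ≤ N - R - 1` carries weight `C(N, s) D(N - s) χ(s) / N! ≤ 1 + e/(N-s+1)! ≤ 1 + e/(R+2)!`.
What is left is the tail `Σ_{m ≥ R+1} (1-ε)^{2m}` of a geometric series.
-/

open Finset

noncomputable def chi (s : ℕ) : ℝ :=
  ∑ k ∈ Finset.range (s + 1), (s.factorial : ℝ) / (k.factorial : ℝ)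

open Equiv Nat Real

section FixedPoints

variable {α : Type*} [Fintype α] [DecidableEq α]

theorem card_perm_fixedPoints_eq (F : Finset α) :
    #{σ : Perm α | ({i | σ i = i} : Finset α) = F}
      = numDerangements (Fintype.card α - #F) := by
  rw [← Fintype.card_subtype, ← card_compl, ← Fintype.card_coe,
    ← card_derangements_eq_numDerangements,
    Fintype.card_congr (derangements.subtypeEquiv (· ∈ Fᶜ))]
  refine Fintype.card_congr (Equiv.subtypeEquivRight fun σ => ?_)
  simp only [Finset.ext_iff, mem_filter, mem_univ, true_and, mem_compl, not_not,
    Function.mem_fixedPoints, Function.IsFixedPt]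
  exact forall_congr' fun _ => iff_comm

theorem card_perm_card_fixedPoints_eq (s : ℕ) :
    #{σ : Perm α | #{i | σ i = i} = s}
      = (Fintype.card α).choose s * numDerangements (Fintype.card α - s) := by
  rw [card_eq_sum_card_fiberwise (f := fun σ : Perm α => ({i | σ i = i} : Finset α))
      (t := powersetCard s univ) fun σ hσ => by simp_all,
    ← Finset.card_univ, ← card_powersetCard, card_eq_sum_ones, sum_mul, one_mul]
  refine sum_congr rfl fun F hF => ?_
  obtain ⟨-, rfl⟩ := mem_powersetCard.mp hF
  rw [Finset.card_univ, ← card_perm_fixedPoints_eq, filter_filter]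
  congr 1
  ext σ
  simp only [mem_filter, mem_univ, true_and, and_iff_right_iff_imp]
  rintro rfl
  rfl

theorem sum_perm_fixCount {M : Type*} [AddCommMonoid M] (N : ℕ) (f : ℕ → M) :
    ∑ σ : Perm (Fin N), f (fixCount σ)
      = ∑ s ∈ range (N + 1), (N.choose s * numDerangements (N - s)) • f s := by
  rw [← sum_fiberwise_of_maps_to (g := fixCount) (t := range (N + 1))
    fun σ _ => mem_range_succ_iff.mpr ((card_le_univ _).trans_eq (Fintype.card_fin N))]
  refine sum_congr rfl fun s _ => ?_
  rw [sum_congr rfl fun σ hσ => congrArg f (mem_filter.mp hσ).2, sum_const]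
  congr 1
  exact (card_perm_card_fixedPoints_eq s).trans (by rw [Fintype.card_fin])

end FixedPoints

theorem numDerangements_div_factorial (n : ℕ) :
    (numDerangements n : ℝ) / n ! = ∑ k ∈ range (n + 1), (-1 : ℝ) ^ k / k ! := by
  rw [← Int.cast_natCast, numDerangements_sum, Int.cast_sum, sum_div]
  refine sum_congr rfl fun k hk => ?_
  have hkn : k ≤ n := mem_range_succ_iff.mp hk
  rw [Nat.ascFactorial_eq_div, add_tsub_cancel_of_le hkn]
  push_cast [Nat.factorial_dvd_factorial hkn]
  field

theorem sum_range_neg_one_pow_div_factorial_le (n : ℕ) :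
    ∑ k ∈ range n, (-1 : ℝ) ^ k / k ! ≤ exp (-1) + 1 / n ! := by
  have hexp : ∑' k : ℕ, (-1 : ℝ) ^ k * (k ! : ℝ)⁻¹ = exp (-1) := by
    simpa [div_eq_mul_inv, ← Real.exp_eq_exp_ℝ] using
      (NormedSpace.expSeries_div_hasSum_exp (-1 : ℝ)).tsum_eq
  have hanti : Antitone fun k : ℕ => (k ! : ℝ)⁻¹ := fun a b hab =>
    inv_anti₀ (by positivity) (by exact_mod_cast Nat.factorial_le hab)
  have hsum : Summable fun k : ℕ => (k ! : ℝ)⁻¹ := by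
    simpa using Real.summable_pow_div_factorial 1
  have := (abs_sub_le_iff.mp (alternating_series_error_bound _ hanti hsum n)).2
  simp only [hexp, div_eq_mul_inv, one_mul] at this ⊢
  linarith

theorem numDerangements_le (n : ℕ) :
    (numDerangements n : ℝ) ≤ n ! * (exp (-1) + 1 / (n + 1)!) := by
  rw [← div_le_iff₀' (by positivity), numDerangements_div_factorial]
  exact sum_range_neg_one_pow_div_factorial_le (n + 1)

theorem chi_nonneg (s : ℕ) : 0 ≤ chi s :=
  sum_nonneg fun _ _ => by positivity

theorem chi_le (s : ℕ) : chi s ≤ exp 1 * s ! := by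
  have hsum : ∑ k ∈ range (s + 1), 1 / (k ! : ℝ) ≤ exp 1 := by
    simpa using Real.sum_le_exp_of_nonneg zero_le_one (s + 1)
  calc chi s = s ! * ∑ k ∈ range (s + 1), 1 / (k ! : ℝ) := by
        simp only [chi, mul_sum, mul_one_div]
    _ ≤ exp 1 * s ! := by rw [mul_comm]; gcongr

theorem choose_mul_numDerangements_mul_chi_le {N s : ℕ} (hs : s ≤ N) :
    (N.choose s * numDerangements (N - s) : ℝ) * chi s ≤ N ! * (1 + exp 1 / (N - s + 1)!) := by
  have hfact : (N.choose s * s ! * (N - s)! : ℝ) = N ! := by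
    exact_mod_cast Nat.choose_mul_factorial_mul_factorial hs
  calc (N.choose s * numDerangements (N - s) : ℝ) * chi s
      ≤ N.choose s * ((N - s)! * (exp (-1) + 1 / (N - s + 1)!)) * (exp 1 * s !) := by
        gcongr
        · exact chi_nonneg s
        · exact numDerangements_le _
        · exact chi_le s
    _ = (N.choose s * s ! * (N - s)! : ℝ) * (exp (-1) * exp 1 + exp 1 / (N - s + 1)!) := by
        ring
    _ = N ! * (1 + exp 1 / (N - s + 1)!) := by
        rw [hfact, ← exp_add, neg_add_cancel, exp_zero]

theorem choose_mul_numDerangements_mul_chi_le_of_add_le {N R s : ℕ} (h : s + R + 1 ≤ N) :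
    (N.choose s * numDerangements (N - s) : ℝ) * chi s ≤ N ! * (1 + exp 1 / (R + 2)!) := by
  have hfact : ((R + 2)! : ℝ) ≤ (N - s + 1)! := by exact_mod_cast Nat.factorial_le (by omega)
  refine (choose_mul_numDerangements_mul_chi_le (by omega)).trans ?_
  gcongr

theorem geom_sum_Ico_lt_of_lt_one {x : ℝ} (hx0 : 0 < x) (hx1 : x < 1) {m n : ℕ}
    (hmn : m ≤ n) :
    ∑ i ∈ Ico m n, x ^ i < x ^ m / (1 - x) := by
  rw [geom_sum_Ico' hx1.ne hmn]
  have : 0 < x ^ n := by positivity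
  gcongr
  linarith

theorem sum_pow_sub_lt {x : ℝ} (hx0 : 0 < x) (hx1 : x < 1) {N R : ℕ} (hRN : R + 1 ≤ N) :
    ∑ s ∈ range (N + 1) with s ≤ N - R - 1, x ^ (N - s) < x ^ (R + 1) / (1 - x) := by
  have hreflect : ∑ s ∈ range (N + 1) with s ≤ N - R - 1, x ^ (N - s)
      = ∑ j ∈ Ico (R + 1) (N + 1), x ^ j :=
    sum_nbij' (N - ·) (N - ·) (by intro s; simp only [mem_filter, mem_range, mem_Ico]; omega)
      (by intro j; simp only [mem_filter, mem_range, mem_Ico]; omega)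
      (by intro s; simp only [mem_filter, mem_range]; omega)
      (by intro j; simp only [mem_Ico]; omega) (fun _ _ => rfl)
  rw [hreflect]
  exact geom_sum_Ico_lt_of_lt_one hx0 hx1 (by omega)

/-- **Bound on the truncation error of the distinguishability function.**
For `0 < ε < 1` and `R + 1 ≤ N`,
`(1/N!) Σ_{σ ∈ S_N, fix(σ) ≤ N-R-1} (1-ε)^{2(N-fix(σ))} χ(fix(σ))
  < (1 + e/(R+2)!) · (1-ε)^{2(R+1)} / (1-(1-ε)²)`. -/
theorem truncation_error_bound (N R : ℕ) (hRN : R + 1 ≤ N)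
    (ε : ℝ) (hε0 : 0 < ε) (hε1 : ε < 1) :
    (1 / (N.factorial : ℝ)) *
        ∑ σ ∈ (Finset.univ : Finset (Equiv.Perm (Fin N))).filter
            (fun σ => fixCount σ ≤ N - R - 1),
          (1 - ε) ^ (2 * (N - fixCount σ)) * chi (fixCount σ) <
      (1 + Real.exp 1 / ((R + 2).factorial : ℝ)) *
        (1 - ε) ^ (2 * (R + 1)) / (1 - (1 - ε) ^ 2) := by
  have hq_pos : 0 < (1 - ε) ^ 2 := by positivity
  have hq_lt_one : (1 - ε) ^ 2 < 1 := by nlinarith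
  calc _ = 1 / (N ! : ℝ) * ∑ s ∈ range (N + 1) with s ≤ N - R - 1,
        (N.choose s * numDerangements (N - s) : ℝ) * chi s * ((1 - ε) ^ 2) ^ (N - s) := by
        rw [sum_filter, sum_filter, sum_perm_fixCount N fun s =>
          if s ≤ N - R - 1 then (1 - ε) ^ (2 * (N - s)) * chi s else 0]
        simp only [smul_ite, smul_zero, nsmul_eq_mul, Nat.cast_mul, pow_mul, ← mul_assoc,
          mul_right_comm _ (((1 - ε) ^ 2) ^ _) (chi _)]
    _ ≤ 1 / (N ! : ℝ) * ∑ s ∈ range (N + 1) with s ≤ N - R - 1,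
        N ! * (1 + exp 1 / (R + 2)!) * ((1 - ε) ^ 2) ^ (N - s) := by
        refine mul_le_mul_of_nonneg_left (sum_le_sum fun s hs => ?_) (by positivity)
        have hs := (mem_filter.mp hs).2
        exact mul_le_mul_of_nonneg_right
          (choose_mul_numDerangements_mul_chi_le_of_add_le (by omega)) (by positivity)
    _ = (1 + exp 1 / (R + 2)!) *
        ∑ s ∈ range (N + 1) with s ≤ N - R - 1, ((1 - ε) ^ 2) ^ (N - s) := by
        rw [← mul_sum]
        field_simp
    _ < (1 + exp 1 / (R + 2)!) * (((1 - ε) ^ 2) ^ (R + 1) / (1 - (1 - ε) ^ 2)) := by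
        gcongr
        exact sum_pow_sub_lt hq_pos hq_lt_one hRN
    _ = _ := by rw [← pow_mul, mul_div_assoc]
end

section
/- Let N, R be natural numbers, and let ε, δ be real numbers with 0 < ε < R/N < 1 and δ > 0. If (R/(e·ε·N))^R ≥ e^{−εN}/δ, then (Nε/R)^R · ((1−ε)/(1−R/N))^{N−R} ≤ δ. -/
/-!
Since `(1 - ε) / (1 - R/N) = 1 + (R - εN) / (N - R) ≤ exp ((R - εN) / (N - R))`, the second factor is
at most `e^{R - εN}`. What remains, `(εN/R)^R e^{R - εN} = e^{-εN} / (R/(eεN))^R`, is at most `δ`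
exactly by the hypothesis.
-/

open Real

theorem one_sub_div_one_sub_le_exp {p q : ℝ} (hq : q < 1) :
    (1 - p) / (1 - q) ≤ exp ((q - p) / (1 - q)) := by
  have hq' : 1 - q ≠ 0 := (sub_pos.2 hq).ne'
  calc (1 - p) / (1 - q) = (q - p) / (1 - q) + 1 := by field_simp; ring
    _ ≤ exp ((q - p) / (1 - q)) := add_one_le_exp _

theorem one_sub_div_one_sub_pow_le_exp {p q : ℝ} (hp : p ≤ 1) (hq : q < 1) (m : ℕ) :
    ((1 - p) / (1 - q)) ^ m ≤ exp (m * ((q - p) / (1 - q))) := by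
  rw [exp_nat_mul]
  exact pow_le_pow_left₀ (div_nonneg (sub_nonneg.2 hp) (sub_pos.2 hq).le)
    (one_sub_div_one_sub_le_exp hq) m

theorem div_pow_mul_exp_sub_eq (n : ℕ) (μ : ℝ) :
    (μ / n) ^ n * exp (n - μ) = exp (-μ) / (n / (exp 1 * μ)) ^ n := by
  rw [sub_eq_add_neg, exp_add, div_pow, div_pow, mul_pow, ← exp_nat_mul, mul_one, div_div_eq_mul_div]
  ring

/-- **Sufficient condition for a small binomial tail bound.**
For naturals `N, R` and reals `ε, δ` with `0 < ε < R/N < 1` and `δ > 0`: if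
`(R/(e·ε·N))^R ≥ e^{-εN}/δ`, then
`(Nε/R)^R · ((1-ε)/(1-R/N))^{N-R} ≤ δ`. -/
theorem hoeffding_bound_le_of_condition (N R : ℕ) (ε δ : ℝ) (hε0 : 0 < ε)
    (hεR : ε < (R : ℝ) / (N : ℝ)) (hR1 : (R : ℝ) / (N : ℝ) < 1) (hδ : 0 < δ)
    (h : ((R : ℝ) / (Real.exp 1 * ε * (N : ℝ))) ^ R ≥ Real.exp (-(ε * (N : ℝ))) / δ) :
    ((N : ℝ) * ε / (R : ℝ)) ^ R *
        ((1 - ε) / (1 - (R : ℝ) / (N : ℝ))) ^ (N - R) ≤ δ := by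
  have hN : (0 : ℝ) < N := by
    rcases (N.cast_nonneg (α := ℝ)).eq_or_lt with hN | hN
    · rw [← hN, div_zero] at hεR; linarith
    · exact hN
  have hR : (0 : ℝ) < R := (div_pos_iff_of_pos_right hN).1 (hε0.trans hεR)
  have hRN : R ≤ N := by exact_mod_cast ((div_lt_one hN).1 hR1).le
  have hsecond : ((1 - ε) / (1 - (R : ℝ) / N)) ^ (N - R) ≤ exp (R - ε * N) := by
    convert one_sub_div_one_sub_pow_le_exp (hεR.trans hR1).le hR1 (N - R) using 2
    rw [Nat.cast_sub hRN]
    field_simp [(sub_pos.2 ((div_lt_one hN).1 hR1)).ne']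
  calc ((N : ℝ) * ε / R) ^ R * ((1 - ε) / (1 - (R : ℝ) / N)) ^ (N - R)
      ≤ (ε * N / R) ^ R * exp (R - ε * N) := by
        rw [mul_comm (N : ℝ) ε]
        exact mul_le_mul_of_nonneg_left hsecond (by positivity)
    _ = exp (-(ε * N)) / (R / (exp 1 * ε * N)) ^ R := by
        rw [div_pow_mul_exp_sub_eq, mul_assoc]
    _ ≤ δ := (div_le_comm₀ hδ (by positivity)).1 h
end
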